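/- The linear map \(\phi\) from \(\mathcal{X}=\{(A_1,A_2,A_3): A_i\in\mathcal{P}_2\}\) to \(\mathcal{Y}=\{(H_{ij})_{1\le i,j\le 3}: H_{ij}\in\mathcal{P}_1,\ H_{ij}=H_{ji}\}\), given by \(\phi(A)_{ij}=\partial_i A_j+\partial_j A_i\), is a linear isomorphism between two vector spaces each of dimension 18. -/

import Mathlib

/-!
Write `x` for the vector of coordinates, `T = xᵀH` and `q = xᵀHx`. An inverse of `φ` is
`ψ(H) = T - ¼ ∇q`. For `A ∈ 𝒳`, Euler's identity gives `xᵀφ(A) = A + ∇(x·A)` and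
`q = 4 x·A`, so `ψ(φ(A)) = A`. For `H ∈ 𝒴` the entries `∂ₘHₖₗ` are constants, and a direct
computation gives `∂ᵢ∂ⱼq = 2(φ(T)ᵢⱼ - Hᵢⱼ)`, so `φ(ψ(H)) = φ(T) - (φ(T) - H) = H`.
Finally `dim 𝒳 = 3 · dim 𝒫₂ = 3 · 6`.
-/

open MvPolynomial

/-- `𝒳 = {(A₁,A₂,A₃) : Aᵢ ∈ 𝒫₂}` as a submodule of `Fin 3 → MvPolynomial (Fin 3) ℝ`. -/
noncomputable def scriptX : Submodule ℝ (Fin 3 → MvPolynomial (Fin 3) ℝ) :=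
  Submodule.pi Set.univ fun _ => MvPolynomial.homogeneousSubmodule (Fin 3) ℝ 2

/-- The linear map `H ↦ H i j - H j i`. -/
noncomputable def symTest (i j : Fin 3) :
    (Fin 3 → Fin 3 → MvPolynomial (Fin 3) ℝ) →ₗ[ℝ] MvPolynomial (Fin 3) ℝ :=
  ((LinearMap.proj j : (Fin 3 → MvPolynomial (Fin 3) ℝ) →ₗ[ℝ] _).comp
      (LinearMap.proj i : (Fin 3 → Fin 3 → MvPolynomial (Fin 3) ℝ) →ₗ[ℝ] _))
    - ((LinearMap.proj i : (Fin 3 → MvPolynomial (Fin 3) ℝ) →ₗ[ℝ] _).comp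
      (LinearMap.proj j : (Fin 3 → Fin 3 → MvPolynomial (Fin 3) ℝ) →ₗ[ℝ] _))

/-- `𝒴 = {(H_{ij}) : H_{ij} ∈ 𝒫₁, H_{ij} = H_{ji}}` as a submodule of
`Fin 3 → Fin 3 → MvPolynomial (Fin 3) ℝ`. -/
noncomputable def scriptY : Submodule ℝ (Fin 3 → Fin 3 → MvPolynomial (Fin 3) ℝ) :=
  (Submodule.pi Set.univ fun _ =>
      Submodule.pi Set.univ fun _ => MvPolynomial.homogeneousSubmodule (Fin 3) ℝ 1) ⊓
  ⨅ (i : Fin 3) (j : Fin 3), LinearMap.ker (symTest i j)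

open Matrix

def Submodule.univPiEquiv {R ι : Type*} {M : ι → Type*} [Semiring R] [∀ i, AddCommMonoid (M i)]
    [∀ i, Module R (M i)] (p : ∀ i, Submodule R (M i)) :
    Submodule.pi Set.univ p ≃ₗ[R] ∀ i, p i where
  toFun x i := ⟨x.1 i, x.2 i (Set.mem_univ i)⟩
  map_add' _ _ := rfl
  map_smul' _ _ := rfl
  invFun v := ⟨fun i => v i, fun i _ => (v i).2⟩
  left_inv _ := rfl
  right_inv _ := rfl

namespace MvPolynomial

variable {σ R : Type*}

section CommSemiring

variable [CommSemiring R]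

theorem finrank_homogeneousSubmodule [Fintype σ] [StrongRankCondition R] (n : ℕ) :
    Module.finrank R (homogeneousSubmodule σ R n) = (Fintype.card σ + n - 1).choose n := by
  classical
  have hdeg : {d : σ →₀ ℕ | d.degree = n} =
      ((Finset.univ : Finset σ).finsuppAntidiag n : Set (σ →₀ ℕ)) := by
    ext d
    simp [Finsupp.degree_eq_sum]
  rw [(LinearEquiv.ofEq _ _ (homogeneousSubmodule_eq_finsupp_supported σ R n)).finrank_eq,
    ← restrictSupport, Module.finrank_eq_nat_card_basis (basisRestrictSupport R _), hdeg,
    Nat.card_coe_set_eq, Set.ncard_coe_finset, Finset.card_finsuppAntidiag_nat_eq_choose,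
    Finset.card_univ]

theorem pderiv_pderiv_eq_zero_of_isHomogeneous_one {p : MvPolynomial σ R}
    (hp : p.IsHomogeneous 1) (i j : σ) : pderiv i (pderiv j p) = 0 := by
  have h0 : (pderiv j p).IsHomogeneous 0 := hp.pderiv
  rw [← totalDegree_zero_iff_isHomogeneous, totalDegree_eq_zero_iff_eq_C] at h0
  rw [h0, pderiv_C]

noncomputable def symmDeriv : (σ → MvPolynomial σ R) →ₗ[R] σ → σ → MvPolynomial σ R where
  toFun A i j := pderiv i (A j) + pderiv j (A i)
  map_add' A B := by
    ext i j : 2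
    simp only [Pi.add_apply, map_add]
    ring
  map_smul' c A := by
    ext i j : 2
    simp [smul_add]

theorem symmDeriv_apply (A : σ → MvPolynomial σ R) (i j : σ) :
    symmDeriv A i j = pderiv i (A j) + pderiv j (A i) := rfl

theorem isHomogeneous_symmDeriv {n : ℕ} {A : σ → MvPolynomial σ R}
    (hA : ∀ k, (A k).IsHomogeneous n) (i j : σ) : (symmDeriv A i j).IsHomogeneous (n - 1) :=
  (hA j).pderiv.add (hA i).pderiv

theorem isSymm_symmDeriv (A : σ → MvPolynomial σ R) : Matrix.IsSymm (symmDeriv A) :=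
  IsSymm.ext fun _ _ => add_comm _ _

variable [Fintype σ]

theorem pderiv_X_dotProduct (i : σ) (B : σ → MvPolynomial σ R) :
    pderiv i (X ⬝ᵥ B) = B i + X ⬝ᵥ fun k => pderiv i (B k) := by
  classical
  simp [dotProduct, Finset.sum_add_distrib, pderiv_X, Pi.single_apply, add_comm]

theorem pderiv_X_vecMul (m : σ) (H : Matrix σ σ (MvPolynomial σ R)) :
    (fun k => pderiv m ((X ᵥ* H) k)) = H m + X ᵥ* H.map (pderiv m) := by
  ext k : 1
  exact pderiv_X_dotProduct m _

theorem isHomogeneous_X_dotProduct {n : ℕ} {B : σ → MvPolynomial σ R}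
    (hB : ∀ k, (B k).IsHomogeneous n) : (X ⬝ᵥ B).IsHomogeneous (n + 1) :=
  IsHomogeneous.sum _ _ _ fun k _ => by
    rw [add_comm]
    exact (isHomogeneous_X R k).mul (hB k)

theorem IsHomogeneous.X_dotProduct_pderiv {n : ℕ} {p : MvPolynomial σ R}
    (hp : p.IsHomogeneous n) : X ⬝ᵥ (fun i => pderiv i p) = n • p :=
  hp.sum_X_mul_pderiv

theorem X_vecMul_symmDeriv_add {n : ℕ} {A : σ → MvPolynomial σ R}
    (hA : ∀ k, (A k).IsHomogeneous n) :
    X ᵥ* symmDeriv A + A = n • A + fun j => pderiv j (X ⬝ᵥ A) := by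
  ext j : 1
  simp only [Pi.add_apply, Pi.smul_apply, pderiv_X_dotProduct, ← (hA j).X_dotProduct_pderiv]
  simp only [vecMul, symmDeriv_apply, dotProduct, mul_add, Finset.sum_add_distrib]
  ring

theorem pderiv_X_dotProduct_X_vecMul {H : Matrix σ σ (MvPolynomial σ R)} (hH : H.IsSymm)
    (j : σ) : pderiv j (X ⬝ᵥ (X ᵥ* H)) = 2 • (X ᵥ* H) j + X ⬝ᵥ (X ᵥ* H.map (pderiv j)) := by
  rw [pderiv_X_dotProduct, pderiv_X_vecMul, dotProduct_add, dotProduct_comm, ← mulVec,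
    ← vecMul_transpose, hH.eq, two_smul, add_assoc]

end CommSemiring

section CommRing

variable [CommRing R] [Fintype σ]

theorem pderiv_pderiv_X_dotProduct_X_vecMul {H : Matrix σ σ (MvPolynomial σ R)}
    (hH : H.IsSymm) (hH1 : ∀ k l, (H k l).IsHomogeneous 1) (i j : σ) :
    pderiv i (pderiv j (X ⬝ᵥ (X ᵥ* H))) = 2 • (symmDeriv (X ᵥ* H) i j - H i j) := by
  have hDD : (H.map (pderiv j)).map (pderiv i) = 0 :=
    Matrix.ext fun k l => pderiv_pderiv_eq_zero_of_isHomogeneous_one (hH1 k l) i j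
  have hTi := congrFun (pderiv_X_vecMul i H) j
  have hTj := congrFun (pderiv_X_vecMul j H) i
  simp only [Pi.add_apply] at hTi hTj
  rw [pderiv_X_dotProduct_X_vecMul hH, map_add, map_nsmul, pderiv_X_dotProduct,
    pderiv_X_vecMul, hDD, vecMul_zero, add_zero, dotProduct_comm, ← mulVec,
    ← vecMul_transpose, (hH.map _).eq, symmDeriv_apply, hTi, hTj, hH.apply i j]
  ring

variable [Invertible (2 : R)]

theorem invOf_two_sq_mul_four : (⅟2 : R) ^ 2 * 4 = 1 := by
  linear_combination (⅟2 * 2 + 1 : R) * invOf_mul_self (2 : R)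

noncomputable def symmDerivInv (H : σ → σ → MvPolynomial σ R) : σ → MvPolynomial σ R :=
  X ᵥ* H - (⅟2 : R) ^ 2 • fun j => pderiv j (X ⬝ᵥ (X ᵥ* H))

theorem isHomogeneous_symmDerivInv {H : σ → σ → MvPolynomial σ R}
    (hH1 : ∀ k l, (H k l).IsHomogeneous 1) (j : σ) : (symmDerivInv H j).IsHomogeneous 2 := by
  have hT : ∀ k, ((X ᵥ* H) k).IsHomogeneous 2 := fun k => isHomogeneous_X_dotProduct (hH1 · k)
  exact (hT j).sub ((homogeneousSubmodule σ R 2).smul_mem _ (isHomogeneous_X_dotProduct hT).pderiv)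

theorem symmDerivInv_symmDeriv {A : σ → MvPolynomial σ R}
    (hA : ∀ k, (A k).IsHomogeneous 2) : symmDerivInv (symmDeriv A) = A := by
  have hT : X ᵥ* symmDeriv A = A + fun j => pderiv j (X ⬝ᵥ A) := by
    linear_combination X_vecMul_symmDeriv_add hA
  have hq : X ⬝ᵥ (X ᵥ* symmDeriv A) = (4 : R) • (X ⬝ᵥ A) := by
    rw [hT, dotProduct_add, (isHomogeneous_X_dotProduct hA).X_dotProduct_pderiv]
    module
  ext j : 1
  rw [symmDerivInv, hq, hT]
  simp only [Pi.add_apply, Pi.sub_apply, Pi.smul_apply, Derivation.map_smul]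
  linear_combination (norm := module) -(invOf_two_sq_mul_four (R := R) • pderiv j (X ⬝ᵥ A))

theorem symmDeriv_symmDerivInv {H : Matrix σ σ (MvPolynomial σ R)} (hH : H.IsSymm)
    (hH1 : ∀ k l, (H k l).IsHomogeneous 1) : symmDeriv (symmDerivInv H) = H := by
  ext i j : 2
  have hij := pderiv_pderiv_X_dotProduct_X_vecMul hH hH1 i j
  have hji := pderiv_pderiv_X_dotProduct_X_vecMul hH hH1 j i
  rw [(isSymm_symmDeriv _).apply, hH.apply] at hji
  simp only [symmDerivInv, map_sub, map_smul, Pi.sub_apply, Pi.smul_apply]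
  rw [symmDeriv_apply (fun j => pderiv j _), hij, hji]
  linear_combination (norm := module)
    -(invOf_two_sq_mul_four (R := R) • (symmDeriv (X ᵥ* H) i j - H i j))

end CommRing

end MvPolynomial

theorem mem_scriptX_iff (A : Fin 3 → MvPolynomial (Fin 3) ℝ) :
    A ∈ scriptX ↔ ∀ k, (A k).IsHomogeneous 2 := by
  simp [scriptX, Submodule.mem_pi]

theorem mem_scriptY_iff (H : Fin 3 → Fin 3 → MvPolynomial (Fin 3) ℝ) :
    H ∈ scriptY ↔ (∀ k l, (H k l).IsHomogeneous 1) ∧ ∀ k l, H k l = H l k := by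
  simp [scriptY, Submodule.mem_pi, symTest, sub_eq_zero]

theorem finrank_scriptX : Module.finrank ℝ scriptX = 18 := by
  have : Module.Finite ℝ (homogeneousSubmodule (Fin 3) ℝ 2) :=
    Module.Finite.iff_fg.mpr (homogeneousSubmodule_fg _ _ 2)
  rw [scriptX, (Submodule.univPiEquiv _).finrank_eq, Module.finrank_pi_fintype]
  simp [finrank_homogeneousSubmodule, Nat.choose]

noncomputable def symmDerivEquiv : scriptX ≃ₗ[ℝ] scriptY where
  __ := symmDeriv.restrict fun A hA => (mem_scriptY_iff _).mpr
    ⟨isHomogeneous_symmDeriv ((mem_scriptX_iff A).mp hA), fun k l => (isSymm_symmDeriv A).apply l k⟩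
  invFun H := ⟨symmDerivInv H.1, (mem_scriptX_iff _).mpr
    (isHomogeneous_symmDerivInv ((mem_scriptY_iff _).mp H.2).1)⟩
  left_inv A := Subtype.ext (symmDerivInv_symmDeriv ((mem_scriptX_iff _).mp A.2))
  right_inv H := Subtype.ext <| by
    obtain ⟨hH1, hH⟩ := (mem_scriptY_iff _).mp H.2
    exact symmDeriv_symmDerivInv (IsSymm.ext fun k l => hH l k) hH1

theorem phi_linear_isomorphism :
    Module.finrank ℝ scriptX = 18 ∧ Module.finrank ℝ scriptY = 18 ∧
    ∃ e : scriptX ≃ₗ[ℝ] scriptY,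
      ∀ (A : scriptX) (i j : Fin 3),
        (e A : Fin 3 → Fin 3 → MvPolynomial (Fin 3) ℝ) i j =
          pderiv i ((A : Fin 3 → MvPolynomial (Fin 3) ℝ) j)
            + pderiv j ((A : Fin 3 → MvPolynomial (Fin 3) ℝ) i) :=
  ⟨finrank_scriptX, symmDerivEquiv.finrank_eq.symm.trans finrank_scriptX, symmDerivEquiv,
    fun _ _ _ => rfl⟩
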